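/- Let ψ be an entropy generator with ψ'(1) = 0 such that ψ' is concave on (0,1) and ψ' is convex on (1,∞). Then for every ρ ∈ (0,1) and every u ∈ (0,1]: ψ''(u/ρ) · (1/ρ) · (ρ − u)² ≥ ψ'(u/ρ) · (u − ρ). In particular, for n-state BGK models this yields condition (admissible-entropies) with μ = 2λ. -/

import Mathlib

open Real Set

/-!
Put `g = ψ'` and `x = u / ρ`; after multiplying by `ρ > 0` the claim reads
`g x (x - 1) ≤ g' x (x - 1)²`. Since `g 1 = 0`, the left side is the secant slope of `g` between
`x` and `1`, times `(x - 1)²`. For `x < 1` concavity of `g` on `(0, 1)`, and for `x > 1`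
convexity on `(1, ∞)`, bound that slope by `g' x`: the tangent at `x` lies above (resp. below)
the chord to `1`. The endpoint `1` lies outside both intervals and is reached by continuity of `g`.
-/

section SlopeAtBoundary

variable {f : ℝ → ℝ} {S : Set ℝ} {a b x : ℝ}

theorem ConcaveOn.slope_le_deriv_of_continuousWithinAt (hf : ConcaveOn ℝ S f) (hx : x ∈ S)
    (hxb : x < b) (hS : Ioo x b ⊆ S) (hfb : ContinuousWithinAt f (Ioo x b) b)
    (hfx : DifferentiableAt ℝ f x) :
    slope f x b ≤ deriv f x := by
  have := right_nhdsWithin_Ioo_neBot hxb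
  have hslope : ContinuousWithinAt (slope f x) (Ioo x b) b := by
    rw [slope_fun_def_field]
    exact (hfb.sub continuousWithinAt_const).div
      (continuousWithinAt_id.sub continuousWithinAt_const) (sub_ne_zero.2 hxb.ne')
  refine le_of_tendsto hslope.tendsto (eventually_nhdsWithin_of_forall fun y hy => ?_)
  exact hf.slope_le_deriv hx (hS hy) hy.1 hfx

theorem ConvexOn.slope_le_deriv_of_continuousWithinAt (hf : ConvexOn ℝ S f) (hx : x ∈ S)
    (hax : a < x) (hS : Ioo a x ⊆ S) (hfa : ContinuousWithinAt f (Ioo a x) a)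
    (hfx : DifferentiableAt ℝ f x) :
    slope f a x ≤ deriv f x := by
  have := left_nhdsWithin_Ioo_neBot hax
  have hslope : ContinuousWithinAt (fun y => slope f y x) (Ioo a x) a := by
    simp_rw [slope_def_field]
    exact (continuousWithinAt_const.sub hfa).div
      (continuousWithinAt_const.sub continuousWithinAt_id) (sub_ne_zero.2 hax.ne')
  refine le_of_tendsto hslope.tendsto (eventually_nhdsWithin_of_forall fun y hy => ?_)
  exact hf.slope_le_deriv (hS hy) hx hy.2 hfx

end SlopeAtBoundary

theorem mul_sub_one_eq_slope_mul_sq {g : ℝ → ℝ} (hg1 : g 1 = 0) (x : ℝ) :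
    g x * (x - 1) = slope g 1 x * (x - 1) ^ 2 := by
  rcases eq_or_ne x 1 with rfl | hx
  · simp
  rw [slope_def_field, hg1, sub_zero]
  field_simp [sub_ne_zero.2 hx]

theorem mul_sub_one_le_deriv_mul_sq {g : ℝ → ℝ} (hg1 : g 1 = 0)
    (hconc : ConcaveOn ℝ (Ioo 0 1) g) (hconv : ConvexOn ℝ (Ioi 1) g) (hcont : ContinuousAt g 1)
    {x : ℝ} (hx : 0 < x) (hgx : DifferentiableAt ℝ g x) :
    g x * (x - 1) ≤ deriv g x * (x - 1) ^ 2 := by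
  rcases lt_trichotomy x 1 with hx1 | rfl | hx1
  · rw [mul_sub_one_eq_slope_mul_sq hg1, slope_comm]
    gcongr
    exact hconc.slope_le_deriv_of_continuousWithinAt ⟨hx, hx1⟩ hx1
      (Ioo_subset_Ioo_left hx.le) hcont.continuousWithinAt hgx
  · simp
  · rw [mul_sub_one_eq_slope_mul_sq hg1]
    gcongr
    exact hconv.slope_le_deriv_of_continuousWithinAt hx1 hx1 Ioo_subset_Ioi_self
      hcont.continuousWithinAt hgx

theorem stmt_7
    (ψ : ℝ → ℝ)
    (hψsmooth : ContDiffOn ℝ 2 ψ (Ioi 0))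
    (hψ'1 : deriv ψ 1 = 0)
    (hconc : ConcaveOn ℝ (Ioo 0 1) (deriv ψ))
    (hconv : ConvexOn ℝ (Ioi 1) (deriv ψ)) :
    ∀ ρ ∈ Set.Ioo (0:ℝ) 1, ∀ u ∈ Set.Ioc (0:ℝ) 1,
      deriv ψ (u / ρ) * (u - ρ) ≤ deriv (deriv ψ) (u / ρ) * (1 / ρ) * (ρ - u) ^ 2 := by
  intro ρ hρ u hu
  have hψ' : ContDiffOn ℝ 1 (deriv ψ) (Ioi 0) :=
    hψsmooth.deriv_of_isOpen isOpen_Ioi (by norm_num)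
  have hdiff : ∀ x ∈ Ioi (0:ℝ), DifferentiableAt ℝ (deriv ψ) x := fun x hx =>
    (hψ'.differentiableOn one_ne_zero x hx).differentiableAt (isOpen_Ioi.mem_nhds hx)
  have hx : 0 < u / ρ := div_pos hu.1 hρ.1
  have key := mul_sub_one_le_deriv_mul_sq hψ'1 hconc hconv
    (hdiff 1 (mem_Ioi.2 one_pos)).continuousAt hx (hdiff _ hx)
  have hρ0 : ρ ≠ 0 := hρ.1.ne'
  calc deriv ψ (u / ρ) * (u - ρ) = ρ * (deriv ψ (u / ρ) * (u / ρ - 1)) := by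
        field_simp
    _ ≤ ρ * (deriv (deriv ψ) (u / ρ) * (u / ρ - 1) ^ 2) := by gcongr; exact hρ.1.le
    _ = deriv (deriv ψ) (u / ρ) * (1 / ρ) * (ρ - u) ^ 2 := by
        field_simp; ring
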